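/- arXiv:2507.04899 — 3 statements merged into one kernel-verified Lean document; each statement's English description precedes it below -/
import Mathlib

section
/- Let H be a complex Hilbert space and let (v_n)_{n=1}^∞ be a total sequence in H (i.e., the closed linear span of {v_n : n ≥ 1} is all of H). Then there exist sequences (w_n)_{n=1}^∞ and (z_n)_{n=1}^∞ in H such that for every n, z_n lies in the (algebraic) linear span of {v_k : 2k ≥ n}, and for every x ∈ H the series Σ_{n=1}^∞ ⟨z_n, x⟩ · w_n converges in H to x. -/
set_option linter.unusedSectionVars false
set_option linter.unusedVariables false
set_option maxHeartbeats 1000000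

open Filter Submodule Set

noncomputable section TSQAux

namespace TSQ

variable {H : Type*} [NormedAddCommGroup H] [InnerProductSpace ℂ H] [CompleteSpace H]

local notation "⟪" x ", " y "⟫" => @inner ℂ _ _ x y

/-- closed span of the tail `{v k : k ≥ m, k ≥ 1}`. -/
def Hc (v : ℕ → H) (m : ℕ) : Submodule ℂ H :=
  (span ℂ (v '' {k | 1 ≤ k ∧ m ≤ k})).topologicalClosure

variable (v : ℕ → H)

instance (m : ℕ) : CompleteSpace (Hc v m) :=
  (Submodule.isClosed_topologicalClosure _).completeSpace_coe

lemma Hc_antitone {m m' : ℕ} (h : m ≤ m') : Hc v m' ≤ Hc v m :=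
  Submodule.topologicalClosure_mono <| span_mono <| image_mono fun k hk => ⟨hk.1, le_trans h hk.2⟩

lemma v_mem_Hc {j : ℕ} (hj : 1 ≤ j) : v j ∈ Hc v j :=
  le_topologicalClosure _ <| subset_span ⟨j, ⟨hj, le_refl j⟩, rfl⟩

/-- the Gram-Schmidt-style increment vector. -/
def uvec (j : ℕ) : H := (orthogonalProjection ((Hc v (j + 1))ᗮ) (v j) : H)

lemma uvec_mem_orth (j : ℕ) : uvec v j ∈ (Hc v (j + 1))ᗮ :=
  (orthogonalProjection ((Hc v (j + 1))ᗮ) (v j)).2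

lemma uvec_eq (j : ℕ) :
    uvec v j = v j - orthogonalProjection (Hc v (j + 1)) (v j) :=
  Submodule.starProjection_orthogonal_val _

lemma uvec_mem_Hc {j : ℕ} (hj : 1 ≤ j) : uvec v j ∈ Hc v j := by
  rw [uvec_eq]
  exact sub_mem (v_mem_Hc v hj) (Hc_antitone v (Nat.le_succ j) (orthogonalProjection _ (v j)).2)

lemma mem_span_uvec {j : ℕ} {a : H} (ha1 : a ∈ Hc v j)
    (ha2 : a ∈ (Hc v (j + 1))ᗮ) : a ∈ (ℂ ∙ uvec v j) := by
  set L : Submodule ℂ H := ℂ ∙ uvec v j with hL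
  set ℓ : H →L[ℂ] H :=
    ((Hc v (j + 1))ᗮ).subtypeL.comp (orthogonalProjection ((Hc v (j + 1))ᗮ)) with hℓ
  have hgen : span ℂ (v '' {k | 1 ≤ k ∧ j ≤ k}) ≤ L.comap (ℓ : H →ₗ[ℂ] H) := by
    rw [span_le]
    rintro _ ⟨k, ⟨hk1, hkj⟩, rfl⟩
    show ℓ (v k) ∈ L
    rcases eq_or_lt_of_le hkj with rfl | hlt
    · exact mem_span_singleton_self _
    · have hvk : v k ∈ Hc v (j + 1) := v_mem_Hc v hk1 |> fun h => Hc_antitone v hlt h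
      have : orthogonalProjection ((Hc v (j + 1))ᗮ) (v k) = 0 :=
        orthogonalProjection_mem_subspace_orthogonalComplement_eq_zero
          ((Hc v (j + 1)).le_orthogonal_orthogonal hvk)
      show (↑(orthogonalProjection ((Hc v (j + 1))ᗮ) (v k)) : H) ∈ L
      rw [this]
      exact zero_mem L
  have hLclosed : IsClosed ((L.comap (ℓ : H →ₗ[ℂ] H) : Submodule ℂ H) : Set H) := by
    have : IsClosed (L : Set H) := Submodule.closed_of_finiteDimensional L
    exact this.preimage ℓ.continuous
  have hsub : Hc v j ≤ L.comap (ℓ : H →ₗ[ℂ] H) := by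
    show (span ℂ (v '' {k | 1 ≤ k ∧ j ≤ k})).topologicalClosure ≤ _
    exact Submodule.topologicalClosure_minimal _ hgen hLclosed
  have hmem : ℓ a ∈ L := hsub ha1
  have : ℓ a = a := by
    show (↑(orthogonalProjection ((Hc v (j + 1))ᗮ) a) : H) = a
    exact Submodule.starProjection_eq_self_iff.mpr ha2
  rwa [this] at hmem

def phi (j : ℕ) : H := ‖uvec v j‖⁻¹ • uvec v j

lemma phi_mem_orth (j : ℕ) : phi v j ∈ (Hc v (j + 1))ᗮ :=
  smul_mem _ _ (uvec_mem_orth v j)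

lemma phi_mem_Hc {j : ℕ} (hj : 1 ≤ j) : phi v j ∈ Hc v j :=
  smul_mem _ _ (uvec_mem_Hc v hj)

lemma norm_phi (j : ℕ) (h : phi v j ≠ 0) : ‖phi v j‖ = 1 := by
  have hu : uvec v j ≠ 0 := by
    intro h0; apply h; simp [phi, h0]
  exact norm_smul_inv_norm hu

lemma inner_phi_eq_zero {j : ℕ} {x : H} (hx : ⟪phi v j, x⟫ = 0) : ⟪uvec v j, x⟫ = 0 := by
  by_cases hu : uvec v j = 0
  · simp [hu]
  · rw [phi] at hx
    have key := inner_smul_real_left (𝕜 := ℂ) (uvec v j) x ‖uvec v j‖⁻¹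
    rw [← RCLike.real_smul_eq_coe_smul (K := ℂ), hx] at key
    rcases smul_eq_zero.mp key.symm with h | h
    · exact absurd h (by simpa using hu)
    · exact h

/-- the intersection of all the closed tail spans -/
def Kinf : Submodule ℂ H := ⨅ j : ℕ, Hc v (j + 1)

lemma Kinf_isClosed : IsClosed ((Kinf v : Submodule ℂ H) : Set H) := by
  rw [Kinf, Submodule.coe_iInf]
  exact isClosed_iInter fun j => Submodule.isClosed_topologicalClosure _

instance : CompleteSpace (Kinf v) := (Kinf_isClosed v).completeSpace_coe

lemma Kinf_le (m : ℕ) (hm : 1 ≤ m) : Kinf v ≤ Hc v m := by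
  have := iInf_le (fun j : ℕ => Hc v (j + 1)) (m - 1)
  rwa [Nat.sub_add_cancel hm] at this

def dvec (i : ℕ) : H := (orthogonalProjection (Kinf v) (v i) : H)

lemma dvec_mem (i : ℕ) : dvec v i ∈ Kinf v := (orthogonalProjection (Kinf v) (v i)).2

def Gs (i : ℕ) : Submodule ℂ H := span ℂ (dvec v '' {m | 1 ≤ m ∧ m ≤ i})

instance (i : ℕ) : FiniteDimensional ℂ (Gs v i) := by
  apply FiniteDimensional.span_of_finite
  exact Set.Finite.image _ <| (Set.finite_Icc 1 i).subset fun m hm => ⟨hm.1, hm.2⟩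

lemma Gs_le_Kinf (i : ℕ) : Gs v i ≤ Kinf v := by
  rw [Gs, span_le]
  rintro _ ⟨m, _, rfl⟩
  exact dvec_mem v m

lemma Gs_mono {i i' : ℕ} (h : i ≤ i') : Gs v i ≤ Gs v i' :=
  span_mono <| image_mono fun m hm => ⟨hm.1, le_trans hm.2 h⟩

def tvec (i : ℕ) : H := dvec v i - (orthogonalProjection (Gs v (i - 1)) (dvec v i) : H)

lemma tvec_mem_orth (i : ℕ) : tvec v i ∈ (Gs v (i - 1))ᗮ :=
  Submodule.sub_starProjection_mem_orthogonal _

lemma tvec_mem_Kinf (i : ℕ) : tvec v i ∈ Kinf v :=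
  sub_mem (dvec_mem v i) (Gs_le_Kinf v (i - 1) (orthogonalProjection _ _).2)

lemma tvec_mem_Gs {i : ℕ} (hi : 1 ≤ i) : tvec v i ∈ Gs v i :=
  sub_mem (subset_span ⟨i, ⟨hi, le_refl i⟩, rfl⟩)
    (Gs_mono v (Nat.sub_le i 1) (orthogonalProjection _ _).2)

def psi (i : ℕ) : H := ‖tvec v i‖⁻¹ • tvec v i

lemma psi_mem_Kinf (i : ℕ) : psi v i ∈ Kinf v := smul_mem _ _ (tvec_mem_Kinf v i)

lemma norm_psi (i : ℕ) (h : psi v i ≠ 0) : ‖psi v i‖ = 1 := by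
  have hu : tvec v i ≠ 0 := by intro h0; apply h; simp [psi, h0]
  exact norm_smul_inv_norm hu

lemma psi_mem_Gs {i : ℕ} (hi : 1 ≤ i) : psi v i ∈ Gs v i := smul_mem _ _ (tvec_mem_Gs v hi)

lemma psi_mem_orth (i : ℕ) : psi v i ∈ (Gs v (i - 1))ᗮ := smul_mem _ _ (tvec_mem_orth v i)

lemma inner_psi_psi {i i' : ℕ} (hi : 1 ≤ i) (h : i < i') : ⟪psi v i', psi v i⟫ = 0 := by
  have h1 : psi v i ∈ Gs v (i' - 1) := Gs_mono v (by omega) (psi_mem_Gs v hi)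
  exact (Submodule.mem_orthogonal' _ _).mp (psi_mem_orth v i') _ h1

lemma inner_psi_eq_zero {i : ℕ} {x : H} (hx : ⟪psi v i, x⟫ = 0) : ⟪tvec v i, x⟫ = 0 := by
  by_cases hu : tvec v i = 0
  · simp [hu]
  · rw [psi] at hx
    have key := inner_smul_real_left (𝕜 := ℂ) (tvec v i) x ‖tvec v i‖⁻¹
    rw [← RCLike.real_smul_eq_coe_smul (K := ℂ), hx] at key
    rcases smul_eq_zero.mp key.symm with h | h
    · exact absurd h (by simpa using hu)
    · exact h

/-! ### the combined orthonormal-or-zero sequence -/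

def evec (n : ℕ) : H :=
  if n = 0 then 0 else if Odd n then phi v ((n + 1) / 2) else psi v (n / 2)

lemma evec_zero : evec v 0 = 0 := by simp [evec]

lemma evec_odd {j : ℕ} (hj : 1 ≤ j) : evec v (2 * j - 1) = phi v j := by
  have h0 : ¬(2 * j - 1 = 0) := by omega
  have h1 : Odd (2 * j - 1) := by rw [Nat.odd_iff]; omega
  have h2 : (2 * j - 1 + 1) / 2 = j := by omega
  rw [evec, if_neg h0, if_pos h1, h2]

lemma evec_even {i : ℕ} (hi : 1 ≤ i) : evec v (2 * i) = psi v i := by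
  have h0 : ¬(2 * i = 0) := by omega
  have h1 : ¬Odd (2 * i) := by rw [Nat.odd_iff]; omega
  have h2 : 2 * i / 2 = i := by omega
  rw [evec, if_neg h0, if_neg h1, h2]

lemma norm_evec {n : ℕ} (h : evec v n ≠ 0) : ‖evec v n‖ = 1 := by
  by_cases h0 : n = 0
  · subst h0; rw [evec_zero] at h; exact absurd rfl h
  by_cases h1 : Odd n
  · rw [evec, if_neg h0, if_pos h1] at h ⊢; exact norm_phi v _ h
  · rw [evec, if_neg h0, if_neg h1] at h ⊢; exact norm_psi v _ h

lemma norm_evec_le (n : ℕ) : ‖evec v n‖ ≤ 1 := by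
  by_cases h : evec v n = 0
  · simp [h]
  · rw [norm_evec v h]

lemma evec_mem {n : ℕ} (hn : 1 ≤ n) : evec v n ∈ Hc v ((n + 1) / 2) := by
  rcases Nat.even_or_odd n with he | ho
  · obtain ⟨i, rfl⟩ : ∃ i, n = 2 * i := by rcases he with ⟨c, hc⟩; exact ⟨c, by omega⟩
    have hi : 1 ≤ i := by omega
    have h2 : (2 * i + 1) / 2 = i := by omega
    rw [evec_even v hi, h2]
    exact Kinf_le v i hi (psi_mem_Kinf v i)
  · obtain ⟨j, rfl⟩ : ∃ j, n = 2 * j - 1 := ⟨(n + 1) / 2, by rcases ho with ⟨a, ha⟩; omega⟩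
    have hj : 1 ≤ j := by omega
    have h2 : (2 * j - 1 + 1) / 2 = j := by omega
    rw [evec_odd v hj, h2]
    exact phi_mem_Hc v hj

lemma evec_orth {n m : ℕ} (hnm : n ≠ m) : ⟪evec v n, evec v m⟫ = 0 := by
  -- reduce to a helper for n < m
  have main : ∀ a b : ℕ, a < b → ⟪evec v a, evec v b⟫ = 0 ∧ ⟪evec v b, evec v a⟫ = 0 := by
    intro a b hab
    by_cases ha : a = 0
    · subst ha; rw [evec_zero]; constructor
      · exact inner_zero_left _
      · exact inner_zero_right _
    -- both ≥ 1
    have ha1 : 1 ≤ a := by omega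
    have hb1 : 1 ≤ b := by omega
    -- helper: something in `(Hc v (j+1))ᗮ` is orthogonal to members of `Hc v (j+1)`
    have key : ∀ (p q : H) (j : ℕ), p ∈ (Hc v (j + 1))ᗮ → q ∈ Hc v (j + 1) →
        ⟪p, q⟫ = 0 ∧ ⟪q, p⟫ = 0 := by
      intro p q j hp hq
      refine ⟨(Submodule.mem_orthogonal' _ _).mp hp _ hq, (Submodule.mem_orthogonal _ _).mp hp _ hq⟩
    rcases Nat.even_or_odd a with hea | hoa
    · -- a even: a = 2i, evec a = psi i; i ≥ 1
      obtain ⟨i, rfl⟩ : ∃ i, a = 2 * i := by rcases hea with ⟨c, hc⟩; exact ⟨c, by omega⟩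
      have hi : 1 ≤ i := by omega
      rw [evec_even v hi]
      rcases Nat.even_or_odd b with heb | hob
      · obtain ⟨i', rfl⟩ : ∃ i', b = 2 * i' := by rcases heb with ⟨c, hc⟩; exact ⟨c, by omega⟩
        have hi' : 1 ≤ i' := by omega
        have hii : i < i' := by omega
        rw [evec_even v hi']
        exact ⟨(inner_eq_zero_symm).mp (inner_psi_psi v hi hii), inner_psi_psi v hi hii⟩
      · obtain ⟨j, rfl⟩ : ∃ j, b = 2 * j - 1 := ⟨(b + 1) / 2, by rcases hob with ⟨c, hc⟩; omega⟩
        have hj : 1 ≤ j := by omega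
        rw [evec_odd v hj]
        have h1 : psi v i ∈ Hc v (j + 1) := Kinf_le v (j + 1) (by omega) (psi_mem_Kinf v i)
        have := key (phi v j) (psi v i) j (phi_mem_orth v j) h1
        exact ⟨this.2, this.1⟩
    · obtain ⟨j, rfl⟩ : ∃ j, a = 2 * j - 1 := ⟨(a + 1) / 2, by rcases hoa with ⟨c, hc⟩; omega⟩
      have hj : 1 ≤ j := by omega
      rw [evec_odd v hj]
      rcases Nat.even_or_odd b with heb | hob
      · obtain ⟨i', rfl⟩ : ∃ i', b = 2 * i' := by rcases heb with ⟨c, hc⟩; exact ⟨c, by omega⟩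
        have hi' : 1 ≤ i' := by omega
        rw [evec_even v hi']
        have h1 : psi v i' ∈ Hc v (j + 1) := Kinf_le v (j + 1) (by omega) (psi_mem_Kinf v i')
        exact key (phi v j) (psi v i') j (phi_mem_orth v j) h1
      · obtain ⟨j', rfl⟩ : ∃ j', b = 2 * j' - 1 := ⟨(b + 1) / 2, by rcases hob with ⟨c, hc⟩; omega⟩
        have hj' : 1 ≤ j' := by omega
        have hjj : j < j' := by omega
        rw [evec_odd v hj']
        have h1 : phi v j' ∈ Hc v (j + 1) := Hc_antitone v (by omega) (phi_mem_Hc v hj')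
        exact key (phi v j) (phi v j') j (phi_mem_orth v j) h1
  rcases Nat.lt_or_ge n m with h | h
  · exact (main n m h).1
  · have h' : m < n := by omega
    exact (main m n h').2

lemma evec_orth_eq_bot (hv : (span ℂ (v '' {k | 1 ≤ k})).topologicalClosure = ⊤) :
    (span ℂ (Set.range (evec v)))ᗮ = ⊥ := by
  rw [Submodule.eq_bot_iff]
  intro x hx
  have hins : ∀ n : ℕ, ⟪evec v n, x⟫ = 0 := fun n =>
    (Submodule.mem_orthogonal _ _).mp hx _ (subset_span ⟨n, rfl⟩)
  have hphi : ∀ j, 1 ≤ j → ⟪phi v j, x⟫ = 0 := by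
    intro j hj
    have := hins (2 * j - 1)
    rwa [evec_odd v hj] at this
  have hpsi : ∀ i, 1 ≤ i → ⟪psi v i, x⟫ = 0 := by
    intro i hi
    have := hins (2 * i)
    rwa [evec_even v hi] at this
  have hHc : ∀ j, 1 ≤ j → x ∈ Hc v j := by
    intro j hj
    induction j, hj using Nat.le_induction with
    | base =>
      have hset : {k : ℕ | 1 ≤ k ∧ 1 ≤ k} = {k : ℕ | 1 ≤ k} := by ext k; simp
      show x ∈ (span ℂ (v '' {k | 1 ≤ k ∧ 1 ≤ k})).topologicalClosure
      rw [hset, hv]; trivial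
    | succ j hj ih =>
      set p : H := ↑(orthogonalProjection (Hc v (j + 1)) x) with hp
      have hr1 : x - p ∈ (Hc v (j + 1))ᗮ := Submodule.sub_starProjection_mem_orthogonal x
      have hr2 : x - p ∈ Hc v j :=
        sub_mem ih (Hc_antitone v (Nat.le_succ j) (orthogonalProjection _ x).2)
      obtain ⟨c, hc⟩ := Submodule.mem_span_singleton.mp (mem_span_uvec v hr2 hr1)
      have hinner : ⟪x - p, x⟫ = 0 := by
        rw [← hc, inner_smul_left, inner_phi_eq_zero v (hphi j hj), mul_zero]
      have hxr : x = (x - p) + p := (sub_add_cancel x p).symm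
      have h2 : ⟪x - p, p⟫ = 0 :=
        (Submodule.mem_orthogonal' _ _).mp hr1 _ (orthogonalProjection _ x).2
      have h0 : ⟪x - p, x - p⟫ = 0 := by
        have h3 := hinner
        nth_rewrite 2 [hxr] at h3
        rwa [inner_add_right, h2, add_zero] at h3
      have hr0 : x - p = 0 := inner_self_eq_zero.mp h0
      have : x = p := by rw [hxr, hr0, zero_add]
      rw [this]
      exact (orthogonalProjection _ x).2
  have hxK : x ∈ Kinf v := (Submodule.mem_iInf _).mpr fun j => hHc (j + 1) (by omega)
  have hd : ∀ i m, 1 ≤ m → m ≤ i → ⟪dvec v m, x⟫ = 0 := by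
    intro i
    induction i with
    | zero => intro m h1 h2; omega
    | succ i ih =>
      intro m h1 h2
      rcases Nat.lt_or_ge m (i + 1) with h | h
      · exact ih m h1 (by omega)
      have hm : m = i + 1 := by omega
      subst hm
      have ht : ⟪tvec v (i + 1), x⟫ = 0 := inner_psi_eq_zero v (hpsi (i + 1) (by omega))
      have hGs : Gs v i ≤ LinearMap.ker ((innerSL ℂ x : H →L[ℂ] ℂ) : H →ₗ[ℂ] ℂ) := by
        rw [Gs, span_le]
        rintro _ ⟨m', ⟨hm1, hm2⟩, rfl⟩
        rw [SetLike.mem_coe, LinearMap.mem_ker, ContinuousLinearMap.coe_coe, innerSL_apply_apply]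
        exact inner_eq_zero_symm.mp (ih m' hm1 hm2)
      have hproj : ⟪(orthogonalProjection (Gs v i) (dvec v (i + 1)) : H), x⟫ = 0 := by
        have hy := hGs (orthogonalProjection (Gs v i) (dvec v (i + 1))).2
        rw [LinearMap.mem_ker, ContinuousLinearMap.coe_coe, innerSL_apply_apply] at hy
        exact inner_eq_zero_symm.mp hy
      have hdec : dvec v (i + 1)
          = tvec v (i + 1) + ↑(orthogonalProjection (Gs v ((i + 1) - 1)) (dvec v (i + 1))) := by
        rw [tvec]; abel
      rw [hdec, inner_add_left, ht, zero_add]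
      simpa using hproj
  have hvx : ∀ i, 1 ≤ i → ⟪v i, x⟫ = 0 := by
    intro i hi
    have h1 : v i - dvec v i ∈ (Kinf v)ᗮ := Submodule.sub_starProjection_mem_orthogonal _
    have h2 : ⟪v i - dvec v i, x⟫ = 0 := (Submodule.mem_orthogonal' _ _).mp h1 x hxK
    have h3 := hd i i hi (le_refl i)
    have h4 : v i = (v i - dvec v i) + dvec v i := (sub_add_cancel _ _).symm
    rw [h4, inner_add_left, h2, h3, add_zero]
  have hker : span ℂ (v '' {k | 1 ≤ k}) ≤ LinearMap.ker ((innerSL ℂ x : H →L[ℂ] ℂ) : H →ₗ[ℂ] ℂ) := by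
    rw [span_le]
    rintro _ ⟨k, hk, rfl⟩
    rw [SetLike.mem_coe, LinearMap.mem_ker, ContinuousLinearMap.coe_coe, innerSL_apply_apply]
    exact inner_eq_zero_symm.mp (hvx k hk)
  have hclosed : IsClosed ((LinearMap.ker ((innerSL ℂ x : H →L[ℂ] ℂ) : H →ₗ[ℂ] ℂ) : Submodule ℂ H) : Set H) :=
    ContinuousLinearMap.isClosed_ker _
  have hfin : x ∈ LinearMap.ker ((innerSL ℂ x : H →L[ℂ] ℂ) : H →ₗ[ℂ] ℂ) := by
    have := Submodule.topologicalClosure_minimal _ hker hclosed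
    rw [hv] at this
    exact this Submodule.mem_top
  rw [LinearMap.mem_ker, ContinuousLinearMap.coe_coe, innerSL_apply_apply] at hfin
  exact inner_self_eq_zero.mp hfin

lemma evec_hasSum (hv : (span ℂ (v '' {k | 1 ≤ k})).topologicalClosure = ⊤) (y : H) :
    HasSum (fun n : ℕ => ⟪evec v n, y⟫ • evec v n) y := by
  classical
  set S : Set ℕ := {n | evec v n ≠ 0} with hS
  have hon : Orthonormal ℂ (fun s : S => evec v s) := by
    rw [orthonormal_iff_ite]
    intro i j
    by_cases hij : i = j
    · subst hij
      rw [if_pos rfl, inner_self_eq_norm_sq_to_K, norm_evec v i.2]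
      norm_num
    · rw [if_neg hij]
      exact evec_orth v fun h => hij (Subtype.ext h)
  have hsp : (span ℂ (Set.range (fun s : S => evec v (s : ℕ))))ᗮ = ⊥ := by
    have hle : span ℂ (Set.range (evec v)) ≤ span ℂ (Set.range fun s : S => evec v (s : ℕ)) := by
      rw [span_le]
      rintro _ ⟨n, rfl⟩
      by_cases h : evec v n = 0
      · rw [h]; exact zero_mem _
      · exact subset_span ⟨⟨n, h⟩, rfl⟩
    have h2 : (span ℂ (Set.range fun s : S => evec v (s : ℕ)))ᗮ ≤ (span ℂ (Set.range (evec v)))ᗮ :=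
      Submodule.orthogonal_le hle
    rw [evec_orth_eq_bot v hv] at h2
    exact le_bot_iff.mp h2
  let b : HilbertBasis S ℂ H := HilbertBasis.mkOfOrthogonalEqBot hon hsp
  have hcoe : ⇑b = fun s : S => evec v (s : ℕ) := HilbertBasis.coe_mkOfOrthogonalEqBot hon hsp
  have hb2 : HasSum (fun s : S => ⟪evec v (s : ℕ), y⟫ • evec v (s : ℕ)) y := by
    have hb := b.hasSum_repr y
    convert hb using 2 with s
    rw [b.repr_apply_apply, hcoe]
  have hsupp : Function.support (fun n : ℕ => ⟪evec v n, y⟫ • evec v n) ⊆ S := by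
    intro n hn
    simp only [Function.mem_support] at hn
    intro h0
    exact hn (by rw [h0]; simp)
  exact (hasSum_subtype_iff_of_support_subset hsupp).mp hb2

lemma exists_z : ∃ z : ℕ → H, ∀ n : ℕ,
    z n ∈ span ℂ (v '' {k | 1 ≤ k ∧ (n + 1) / 2 ≤ k}) ∧
    ‖z n - evec v n‖ ≤ (1 / 2 : ℝ) ^ (n + 2) ∧ (evec v n = 0 → z n = 0) := by
  have h : ∀ n : ℕ, ∃ zn : H,
      zn ∈ span ℂ (v '' {k | 1 ≤ k ∧ (n + 1) / 2 ≤ k}) ∧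
      ‖zn - evec v n‖ ≤ (1 / 2 : ℝ) ^ (n + 2) ∧ (evec v n = 0 → zn = 0) := by
    intro n
    by_cases h0 : evec v n = 0
    · refine ⟨0, zero_mem _, ?_, fun _ => rfl⟩
      rw [h0, sub_zero, norm_zero]
      positivity
    · have hn1 : 1 ≤ n := by
        by_contra hc
        have : n = 0 := by omega
        exact h0 (this ▸ evec_zero v)
      have hmem : evec v n ∈ closure
          ((span ℂ (v '' {k | 1 ≤ k ∧ (n + 1) / 2 ≤ k}) : Submodule ℂ H) : Set H) := by
        rw [← Submodule.topologicalClosure_coe]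
        exact evec_mem v hn1
      rw [Metric.mem_closure_iff] at hmem
      obtain ⟨zn, hzn, hd⟩ := hmem ((1 / 2 : ℝ) ^ (n + 2)) (by positivity)
      refine ⟨zn, hzn, ?_, fun h => absurd h h0⟩
      rw [← dist_eq_norm, dist_comm]
      exact le_of_lt hd
  exact ⟨fun n => (h n).choose, fun n => (h n).choose_spec⟩

lemma main (hv : (span ℂ (v '' {k | 1 ≤ k})).topologicalClosure = ⊤) :
    ∃ w z : ℕ → H,
      (∀ n, 1 ≤ n → z n ∈ span ℂ (v '' {k | 1 ≤ k ∧ n ≤ 2 * k})) ∧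
      ∀ x : H,
        Tendsto (fun N => ∑ n ∈ Finset.range N, (⟪z (n + 1), x⟫ : ℂ) • w (n + 1))
          atTop (nhds x) := by
  obtain ⟨z, hz⟩ := exists_z v
  set u : ℕ → H := fun n => z n - evec v n with hu
  have hunorm : ∀ n, ‖u n‖ ≤ (1 / 2 : ℝ) ^ (n + 2) := fun n => (hz n).2.1
  have hbnd : ∀ (x : H) (n : ℕ), ‖⟪evec v n, x⟫ • u n‖ ≤ ‖x‖ * (1 / 2 : ℝ) ^ (n + 2) := by
    intro x n
    rw [norm_smul]
    calc ‖(⟪evec v n, x⟫ : ℂ)‖ * ‖u n‖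
        ≤ (‖evec v n‖ * ‖x‖) * ‖u n‖ := by
          apply mul_le_mul_of_nonneg_right (norm_inner_le_norm _ _) (norm_nonneg _)
      _ ≤ (1 * ‖x‖) * ((1 / 2 : ℝ) ^ (n + 2)) := by
          apply _root_.mul_le_mul
          · exact mul_le_mul_of_nonneg_right (norm_evec_le v n) (norm_nonneg _)
          · exact hunorm n
          · exact norm_nonneg _
          · positivity
      _ = ‖x‖ * (1 / 2 : ℝ) ^ (n + 2) := by ring
  have hgs : ∀ x : H, Summable (fun n : ℕ => ‖x‖ * (1 / 2 : ℝ) ^ (n + 2)) := by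
    intro x
    have : Summable (fun n : ℕ => (1 / 2 : ℝ) ^ (n + 2)) := by
      simp_rw [pow_add]
      exact (summable_geometric_of_lt_one (by norm_num) (by norm_num)).mul_right _
    exact this.mul_left _
  have hsummable : ∀ x : H, Summable (fun n : ℕ => ⟪evec v n, x⟫ • u n) := fun x =>
    Summable.of_norm_bounded (hgs x) (hbnd x)
  have htsum : ∀ x : H, ‖∑' n : ℕ, ⟪evec v n, x⟫ • u n‖ ≤ (1 / 2) * ‖x‖ := by
    intro x
    have hnorm_summable : Summable (fun n : ℕ => ‖⟪evec v n, x⟫ • u n‖) :=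
      Summable.of_nonneg_of_le (fun n => norm_nonneg _) (hbnd x) (hgs x)
    calc ‖∑' n : ℕ, ⟪evec v n, x⟫ • u n‖
        ≤ ∑' n : ℕ, ‖⟪evec v n, x⟫ • u n‖ := norm_tsum_le_tsum_norm hnorm_summable
      _ ≤ ∑' n : ℕ, ‖x‖ * (1 / 2 : ℝ) ^ (n + 2) := Summable.tsum_le_tsum (hbnd x) hnorm_summable (hgs x)
      _ = ‖x‖ * ∑' n : ℕ, (1 / 2 : ℝ) ^ (n + 2) := tsum_mul_left
      _ = ‖x‖ * ∑' n : ℕ, ((1 / 2 : ℝ) ^ n * (1 / 2 : ℝ) ^ 2) := by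
          congr 1
          exact tsum_congr fun n => (pow_add _ n 2)
      _ = ‖x‖ * ((∑' n : ℕ, (1 / 2 : ℝ) ^ n) * (1 / 2 : ℝ) ^ 2) := by
          rw [tsum_mul_right]
      _ = (1 / 2) * ‖x‖ := by rw [tsum_geometric_two]; ring
  let Alin : H →ₗ[ℂ] H :=
    { toFun := fun x => ∑' n : ℕ, ⟪evec v n, x⟫ • u n
      map_add' := by
        intro a b
        simp only [inner_add_right, add_smul]
        exact Summable.tsum_add (hsummable a) (hsummable b)
      map_smul' := by
        intro c a
        simp only [inner_smul_right, mul_smul, RingHom.id_apply]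
        exact Summable.tsum_const_smul c (hsummable a) }
  let Acl : H →L[ℂ] H := Alin.mkContinuous (1 / 2) htsum
  have hAnorm : ‖Acl‖ ≤ 1 / 2 := Alin.mkContinuous_norm_le (by norm_num) htsum
  have hAe : ∀ m : ℕ, Acl (evec v m) = u m := by
    intro m
    have h1 : Acl (evec v m) = ∑' n : ℕ, ⟪evec v n, evec v m⟫ • u n := rfl
    rw [h1, tsum_eq_single m]
    · by_cases h0 : evec v m = 0
      · have hz0 : z m = 0 := (hz m).2.2 h0
        simp [hu, h0, hz0]
      · rw [inner_self_eq_norm_sq_to_K, norm_evec v h0]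
        norm_num
    · intro n hn
      rw [evec_orth v hn, zero_smul]
  set T : H →L[ℂ] H := 1 + Acl with hT
  have hTe : ∀ m : ℕ, T (evec v m) = z m := by
    intro m
    have h1 : T (evec v m) = evec v m + Acl (evec v m) := rfl
    rw [h1, hAe m, hu]
    simp
  set B : H →L[ℂ] H := ContinuousLinearMap.adjoint T with hB
  have hBeq : B = 1 + ContinuousLinearMap.adjoint Acl := by
    rw [hB, hT, map_add]
    congr 1
    rw [ContinuousLinearMap.one_def, ContinuousLinearMap.adjoint_id]
  have h1B : ‖(1 : H →L[ℂ] H) - B‖ < 1 := by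
    have heq : (1 : H →L[ℂ] H) - B = -(ContinuousLinearMap.adjoint Acl) := by
      rw [hBeq]; abel
    rw [heq, norm_neg]
    have : ‖ContinuousLinearMap.adjoint Acl‖ = ‖Acl‖ :=
      LinearIsometryEquiv.norm_map ContinuousLinearMap.adjoint Acl
    rw [this]
    linarith
  set V : (H →L[ℂ] H)ˣ := Units.oneSub ((1 : H →L[ℂ] H) - B) h1B with hVdef
  have hV : (V : H →L[ℂ] H) = B := by
    show (1 : H →L[ℂ] H) - ((1 : H →L[ℂ] H) - B) = B
    abel
  set W : H →L[ℂ] H := ↑(V⁻¹) with hW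
  have hWB : ∀ y : H, W (B y) = y := by
    intro y
    have hmul : (↑(V⁻¹) * ↑V : H →L[ℂ] H) = 1 := V.inv_mul
    have := congrArg (fun f : H →L[ℂ] H => f y) hmul
    simpa [ContinuousLinearMap.mul_apply, hV, ContinuousLinearMap.one_apply, hW] using this
  refine ⟨fun n => W (evec v n), z, ?_, ?_⟩
  · intro n hn
    refine span_mono (image_mono ?_) ((hz n).1)
    intro k hk
    obtain ⟨hk1, hk2⟩ := hk
    exact ⟨hk1, by omega⟩
  · intro x
    have hpar := evec_hasSum v hv (B x)
    have htend := hpar.tendsto_sum_nat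
    have hshift : Tendsto
        (fun N => ∑ n ∈ Finset.range N, ⟪evec v (n + 1), B x⟫ • evec v (n + 1))
        atTop (nhds (B x)) := by
      have hcomp := htend.comp (tendsto_add_atTop_nat 1)
      refine Tendsto.congr ?_ hcomp
      intro N
      show ∑ n ∈ Finset.range (N + 1), ⟪evec v n, B x⟫ • evec v n = _
      rw [Finset.sum_range_succ']
      simp [evec_zero]
    have hWtend := (W.continuous.tendsto (B x)).comp hshift
    rw [hWB x] at hWtend
    refine Tendsto.congr ?_ hWtend
    intro N
    show W (∑ n ∈ Finset.range N, ⟪evec v (n + 1), B x⟫ • evec v (n + 1)) = _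
    rw [map_sum]
    refine Finset.sum_congr rfl fun n _ => ?_
    rw [map_smul]
    congr 1
    rw [← hTe (n + 1), hB]
    exact ContinuousLinearMap.adjoint_inner_right T (evec v (n + 1)) x

end TSQ


open Filter

/-- If `(v n)_{n ≥ 1}` is a total sequence in a complex Hilbert space `H`, then there are
sequences `(w n)` and `(z n)` in `H` with `z n` in the linear span of `{v k : 2k ≥ n}`,
such that `∑ n, ⟪z n, x⟫ • w n` converges to `x` for every `x` (i.e. `∑ n, w n (z n)* = id`
in the strong operator topology). -/
theorem total_sequence_exists_identity_decomposition
    {H : Type*} [NormedAddCommGroup H] [InnerProductSpace ℂ H] [CompleteSpace H]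
    (v : ℕ → H)
    (hv : (Submodule.span ℂ (v '' {k | 1 ≤ k})).topologicalClosure = ⊤) :
    ∃ w z : ℕ → H,
      (∀ n, 1 ≤ n → z n ∈ Submodule.span ℂ (v '' {k | 1 ≤ k ∧ n ≤ 2 * k})) ∧
      ∀ x : H,
        Tendsto (fun N => ∑ n ∈ Finset.range N, (inner ℂ (z (n + 1)) x : ℂ) • w (n + 1))
          atTop (nhds x) := by
  exact TSQ.main v hv
end TSQAux
end

section
/- Let H be a complex Hilbert space and let (v_n)_{n=1}^∞ be a total sequence in H. Then there exists a sequence (λ_n)_{n=1}^∞ of positive real numbers such that for every x ∈ H, ‖x‖² ≤ Σ_{n=1}^∞ λ_n |⟨v_n, x⟩|², where the sum on the right-hand side is interpreted in the extended nonnegative reals (it may be infinite). -/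
/-!
Let `Fₚ` be the orthogonal complement of the span of the tail `(v n)_{n ≥ p}`. Since the tail at
`p` only adds `v p` to the tail at `p + 1`, the `Fₚ` grow by at most one dimension at a time, from
`F₀ = 0` (totality); hence `‖P_{Fₚ} x‖² ≤ ∑_{m < p} |⟨δₘ, x⟩|²` for vectors `δₘ` of norm at most
one with `δₘ ⊥ Fₘ`, i.e. `δₘ` in the closure of the `m`-th tail.

A vector in the closure of the `j`-th tail is close to a finite combination of the `v n` with
`n ≥ j`, and by Cauchy–Schwarz the inner product of `x` with that combination is controlled by
`∑ λₙ |⟨vₙ, x⟩|²` as soon as finitely many weights `λₙ`, all with `n ≥ j`, are large. So each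
weight meets only finitely many such demands, and one sequence `λ` serves a whole sequence of
targets. Taking as targets the rescaled `δₘ` and the projections of a dense sequence `(y_q)` onto
the closures of the tails, a unit vector `x` with `∑ λₙ |⟨vₙ, x⟩|² = s²` satisfies
`‖P_{F_q} x‖² ≤ (s + 1)² / 8` and, for `y_q` close to `x`, `‖x - P_{F_q} x‖² ≤ (s + 3/2) / 8`.
Pythagoras then forces `s ≥ 1`.
-/

open Submodule Set
open scoped Finset InnerProductSpace ENNReal

noncomputable section

variable (𝕜 : Type*) {E : Type*} [RCLike 𝕜] [NormedAddCommGroup E] [InnerProductSpace 𝕜 E]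

def weightedFrameSum (lam : ℕ → ℝ) (v : ℕ → E) (x : E) : ℝ≥0∞ :=
  ∑' n, ENNReal.ofReal (lam n * ‖⟪v n, x⟫_𝕜‖ ^ 2)

def tailSpan (v : ℕ → E) (p : ℕ) : Submodule 𝕜 E :=
  span 𝕜 (v '' Ici p)

def DominatesInner (lam : ℕ → ℝ) (v t : ℕ → E) : Prop :=
  ∀ j x (s : ℝ), 0 ≤ s → weightedFrameSum 𝕜 lam v x ≤ ENNReal.ofReal (s ^ 2) →
    ‖⟪t j, x⟫_𝕜‖ ≤ s + ‖x‖

variable {𝕜}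

lemma separableSpace_of_topologicalClosure_span_eq_top {v : ℕ → E}
    (hv : (span 𝕜 (range v)).topologicalClosure = ⊤) : TopologicalSpace.SeparableSpace E := by
  rw [← TopologicalSpace.isSeparable_univ_iff, ← top_coe (R := 𝕜), ← hv, topologicalClosure_coe]
  exact (countable_range v).isSeparable.span.closure

lemma norm_starProjection_sq_le (K : Submodule 𝕜 E) [K.HasOrthogonalProjection] (x y : E) :
    ‖K.starProjection x‖ ^ 2 ≤ ‖⟪K.starProjection y, x⟫_𝕜‖ + ‖x - y‖ * ‖x‖ := calc
  ‖K.starProjection x‖ ^ 2 = RCLike.re ⟪K.starProjection x, x⟫_𝕜 :=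
    (re_inner_starProjection_eq_normSq K x).symm
  _ ≤ ‖⟪K.starProjection y, x⟫_𝕜 + ⟪K.starProjection (x - y), x⟫_𝕜‖ := by
    rw [map_sub, inner_sub_left, add_sub_cancel]
    exact RCLike.re_le_norm _
  _ ≤ ‖⟪K.starProjection y, x⟫_𝕜‖ + ‖x - y‖ * ‖x‖ := by
    refine (norm_add_le _ _).trans (add_le_add_right ((norm_inner_le_norm _ _).trans ?_) _)
    gcongr
    exact K.norm_starProjection_apply_le _

lemma weightedFrameSum_mono {lam lam' : ℕ → ℝ} (h : lam ≤ lam') (v : ℕ → E) (x : E) :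
    weightedFrameSum 𝕜 lam v x ≤ weightedFrameSum 𝕜 lam' v x :=
  ENNReal.tsum_le_tsum fun n => ENNReal.ofReal_le_ofReal (by gcongr; exact h n)

lemma weightedFrameSum_smul (lam : ℕ → ℝ) (v : ℕ → E) (c : 𝕜) (x : E) :
    weightedFrameSum 𝕜 lam v (c • x) = ENNReal.ofReal (‖c‖ ^ 2) * weightedFrameSum 𝕜 lam v x := by
  rw [weightedFrameSum, weightedFrameSum, ← ENNReal.tsum_mul_left]
  congr 1 with n
  rw [← ENNReal.ofReal_mul (by positivity), inner_smul_right, norm_mul]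
  ring_nf

lemma ofReal_norm_sq_le_weightedFrameSum_of_norm_eq_one {lam : ℕ → ℝ} {v : ℕ → E}
    (h : ∀ z : E, ‖z‖ = 1 → 1 ≤ weightedFrameSum 𝕜 lam v z) (x : E) :
    ENNReal.ofReal (‖x‖ ^ 2) ≤ weightedFrameSum 𝕜 lam v x := by
  rcases eq_or_ne x 0 with rfl | hx
  · simp
  have hxz : x = (‖x‖ : 𝕜) • (‖x‖⁻¹ : 𝕜) • x := by
    rw [smul_smul, mul_inv_cancel₀ (by simpa using hx), one_smul]
  rw [hxz, weightedFrameSum_smul, RCLike.norm_ofReal, abs_norm, ← hxz]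
  exact le_mul_of_one_le_right' (h _ (norm_smul_inv_norm hx))

lemma DominatesInner.mono {lam lam' : ℕ → ℝ} {v t : ℕ → E} (h : DominatesInner 𝕜 lam v t)
    (hle : lam ≤ lam') : DominatesInner 𝕜 lam' v t :=
  fun j x s hs hx => h j x s hs ((weightedFrameSum_mono hle v x).trans hx)

lemma ofReal_norm_inner_sq_le_weightedFrameSum {lam : ℕ → ℝ} (v : ℕ → E) (c : ℕ →₀ 𝕜)
    (hc : ∀ n ∈ c.support, #c.support * ‖c n‖ ^ 2 ≤ lam n) (x : E) :
    ENNReal.ofReal (‖⟪Finsupp.linearCombination 𝕜 v c, x⟫_𝕜‖ ^ 2) ≤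
      weightedFrameSum 𝕜 lam v x := by
  set S := c.support
  have h_inner : ‖⟪Finsupp.linearCombination 𝕜 v c, x⟫_𝕜‖ ≤ ∑ n ∈ S, ‖c n‖ * ‖⟪v n, x⟫_𝕜‖ := by
    rw [Finsupp.linearCombination_apply, Finsupp.sum, sum_inner]
    refine (norm_sum_le _ _).trans_eq (Finset.sum_congr rfl fun n _ => ?_)
    rw [inner_smul_left, norm_mul, RCLike.norm_conj]
  have h_sq : ‖⟪Finsupp.linearCombination 𝕜 v c, x⟫_𝕜‖ ^ 2 ≤
      ∑ n ∈ S, lam n * ‖⟪v n, x⟫_𝕜‖ ^ 2 := calc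
    _ ≤ (∑ n ∈ S, ‖c n‖ * ‖⟪v n, x⟫_𝕜‖) ^ 2 := by gcongr
    _ ≤ #S * ∑ n ∈ S, (‖c n‖ * ‖⟪v n, x⟫_𝕜‖) ^ 2 := sq_sum_le_card_mul_sum_sq
    _ = ∑ n ∈ S, #S * ‖c n‖ ^ 2 * ‖⟪v n, x⟫_𝕜‖ ^ 2 := by
      rw [Finset.mul_sum]; congr 1 with n; ring
    _ ≤ _ := Finset.sum_le_sum fun n hn => by gcongr; exact hc n hn
  calc ENNReal.ofReal _ ≤ ENNReal.ofReal (∑ n ∈ S, lam n * ‖⟪v n, x⟫_𝕜‖ ^ 2) :=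
        ENNReal.ofReal_le_ofReal h_sq
    _ = ∑ n ∈ S, ENNReal.ofReal (lam n * ‖⟪v n, x⟫_𝕜‖ ^ 2) :=
        ENNReal.ofReal_sum_of_nonneg fun n hn => by
          have : 0 ≤ lam n := le_trans (by positivity) (hc n hn)
          positivity
    _ ≤ _ := ENNReal.sum_le_tsum _

lemma exists_weights_forall_ofReal_norm_inner_sq_le (v g : ℕ → E)
    (hg : ∀ j, g j ∈ tailSpan 𝕜 v j) :
    ∃ lam : ℕ → ℝ, (∀ n, 0 < lam n) ∧
      ∀ j x, ENNReal.ofReal (‖⟪g j, x⟫_𝕜‖ ^ 2) ≤ weightedFrameSum 𝕜 lam v x := by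
  choose c hc_supp hc using fun j => (Finsupp.mem_span_image_iff_linearCombination 𝕜).1 (hg j)
  -- `c j` is supported on `n ≥ j`, so `λ n` only has to meet the demands of the `j ≤ n`.
  refine ⟨fun n => 1 + ∑ j ∈ Finset.range (n + 1), #(c j).support * ‖c j n‖ ^ 2,
    fun n => by positivity, fun j x => ?_⟩
  rw [← hc j]
  refine ofReal_norm_inner_sq_le_weightedFrameSum v (c j) (fun n hn => ?_) x
  have hjn : j ≤ n := (Finsupp.mem_supported _ _).1 (hc_supp j) hn
  have := Finset.single_le_sum (f := fun j => (#(c j).support : ℝ) * ‖c j n‖ ^ 2)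
    (fun _ _ => by positivity) (Finset.mem_range.2 (Nat.lt_succ_of_le hjn))
  linarith

lemma exists_weights_dominatesInner [CompleteSpace E] (v t : ℕ → E)
    (ht : ∀ j, t j ∈ (tailSpan 𝕜 v j)ᗮᗮ) :
    ∃ lam : ℕ → ℝ, (∀ n, 0 < lam n) ∧ DominatesInner 𝕜 lam v t := by
  have h_approx : ∀ j, ∃ g ∈ tailSpan 𝕜 v j, ‖t j - g‖ ≤ 1 := fun j => by
    have := ht j
    rw [orthogonal_orthogonal_eq_closure, ← SetLike.mem_coe, topologicalClosure_coe] at this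
    obtain ⟨g, hg, hdist⟩ := Metric.mem_closure_iff.1 this 1 one_pos
    exact ⟨g, hg, by rw [← dist_eq_norm]; exact hdist.le⟩
  choose g hg hgt using h_approx
  obtain ⟨lam, hlam_pos, hlam⟩ := exists_weights_forall_ofReal_norm_inner_sq_le v g hg
  refine ⟨lam, hlam_pos, fun j x s hs hx => ?_⟩
  have hgx : ‖⟪g j, x⟫_𝕜‖ ≤ s := by
    have := (hlam j x).trans hx
    rw [ENNReal.ofReal_le_ofReal_iff (by positivity)] at this
    exact (pow_le_pow_iff_left₀ (norm_nonneg _) hs two_ne_zero).1 this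
  calc ‖⟪t j, x⟫_𝕜‖ = ‖⟪g j, x⟫_𝕜 + ⟪t j - g j, x⟫_𝕜‖ := by rw [inner_sub_left, add_sub_cancel]
    _ ≤ ‖⟪g j, x⟫_𝕜‖ + ‖t j - g j‖ * ‖x‖ :=
      (norm_add_le _ _).trans (by gcongr; exact norm_inner_le_norm _ _)
    _ ≤ s + 1 * ‖x‖ := by gcongr; exact hgt j
    _ = s + ‖x‖ := by rw [one_mul]

lemma tailSpan_eq_sup (v : ℕ → E) (p : ℕ) :
    tailSpan 𝕜 v p = 𝕜 ∙ v p ⊔ tailSpan 𝕜 v (p + 1) := by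
  rw [tailSpan, tailSpan, ← span_insert, ← image_insert_eq]
  congr 2 with n
  simp only [mem_Ici, mem_insert_iff]
  omega

lemma mem_orthogonal_tailSpan_iff {v : ℕ → E} {p : ℕ} {y : E} :
    y ∈ (tailSpan 𝕜 v p)ᗮ ↔ y ∈ (tailSpan 𝕜 v (p + 1))ᗮ ∧ ⟪v p, y⟫_𝕜 = 0 := by
  rw [tailSpan_eq_sup, ← inf_orthogonal, Submodule.mem_inf,
    mem_orthogonal_singleton_iff_inner_right, and_comm]

lemma orthogonal_tailSpan_zero [CompleteSpace E] {v : ℕ → E}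
    (hv : (span 𝕜 (range v)).topologicalClosure = ⊤) : (tailSpan 𝕜 v 0)ᗮ = ⊥ := by
  rw [← topologicalClosure_eq_top_iff, ← hv, tailSpan, ← image_univ]
  congr 3 with n
  simp

section Complete

variable [CompleteSpace E]

variable (𝕜) in
/-- Spans `(tailSpan 𝕜 v (p + 1))ᗮ ⊖ (tailSpan 𝕜 v p)ᗮ`, and is `0` when that space is trivial. -/
def tailDirection (v : ℕ → E) (p : ℕ) : E :=
  (‖(tailSpan 𝕜 v (p + 1))ᗮ.starProjection (v p)‖⁻¹ : 𝕜) •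
    (tailSpan 𝕜 v (p + 1))ᗮ.starProjection (v p)

lemma norm_tailDirection_le (v : ℕ → E) (p : ℕ) : ‖tailDirection 𝕜 v p‖ ≤ 1 := by
  rw [tailDirection]
  set u := (tailSpan 𝕜 v (p + 1))ᗮ.starProjection (v p)
  rcases eq_or_ne u 0 with hu | hu
  · simp [hu]
  · exact (norm_smul_inv_norm hu).le

lemma tailDirection_mem (v : ℕ → E) (p : ℕ) :
    tailDirection 𝕜 v p ∈ (tailSpan 𝕜 v (p + 1))ᗮ :=
  smul_mem _ _ (starProjection_apply_mem _ _)

lemma tailDirection_mem_orthogonal (v : ℕ → E) (p : ℕ) :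
    tailDirection 𝕜 v p ∈ (tailSpan 𝕜 v p)ᗮᗮ := by
  rw [mem_orthogonal]
  intro y hy
  obtain ⟨hy', hyv⟩ := mem_orthogonal_tailSpan_iff.1 hy
  rw [tailDirection, inner_smul_right, ← inner_starProjection_left_eq_right,
    starProjection_eq_self_iff.2 hy', ← inner_conj_symm, hyv, map_zero, mul_zero]

lemma starProjection_orthogonal_tailSpan_succ (v : ℕ → E) (p : ℕ) (x : E) :
    (tailSpan 𝕜 v (p + 1))ᗮ.starProjection x =
      (tailSpan 𝕜 v p)ᗮ.starProjection x + ⟪tailDirection 𝕜 v p, x⟫_𝕜 • tailDirection 𝕜 v p := by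
  set F' := (tailSpan 𝕜 v (p + 1))ᗮ
  set δ := tailDirection 𝕜 v p
  set y := F'.starProjection x
  suffices (tailSpan 𝕜 v p)ᗮ.starProjection x = y - ⟪δ, x⟫_𝕜 • δ by
    rw [this, sub_add_cancel]
  refine eq_starProjection_of_mem_of_inner_eq_zero ?_ fun w hw => ?_
  · refine mem_orthogonal_tailSpan_iff.2 ⟨sub_mem (starProjection_apply_mem _ _)
      (smul_mem _ _ (tailDirection_mem v p)), ?_⟩
    set u := F'.starProjection (v p)
    have h_vy : ⟪v p, y⟫_𝕜 = ⟪u, x⟫_𝕜 := (inner_starProjection_left_eq_right _ _ _).symm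
    have h_vδ : ⟪v p, δ⟫_𝕜 = ⟪u, δ⟫_𝕜 := by
      rw [inner_starProjection_left_eq_right, starProjection_eq_self_iff.2 (tailDirection_mem v p)]
    rw [inner_sub_right, inner_smul_right, h_vy, h_vδ]
    rcases eq_or_ne u 0 with hu | hu
    · simp [δ, tailDirection, u, hu]
    · have hδ : δ = (‖u‖⁻¹ : 𝕜) • u := rfl
      rw [hδ, inner_smul_left, inner_smul_right, inner_self_eq_norm_sq_to_K, map_inv₀,
        RCLike.conj_ofReal]
      have : (‖u‖ : 𝕜) ≠ 0 := by simpa using hu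
      field_simp
      ring
  · have hw' := (mem_orthogonal_tailSpan_iff.1 hw).1
    rw [sub_sub_eq_add_sub, add_sub_right_comm, inner_add_left,
      starProjection_inner_eq_zero x w hw', inner_smul_left,
      (mem_orthogonal' _ _).1 (tailDirection_mem_orthogonal v p) w hw, mul_zero, zero_add]

lemma norm_starProjection_orthogonal_tailSpan_sq_le_sum {v : ℕ → E}
    (hv : (tailSpan 𝕜 v 0)ᗮ = ⊥) (x : E) (p : ℕ) :
    ‖(tailSpan 𝕜 v p)ᗮ.starProjection x‖ ^ 2 ≤
      ∑ m ∈ Finset.range p, ‖⟪tailDirection 𝕜 v m, x⟫_𝕜‖ ^ 2 := by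
  induction p with
  | zero => simp [hv]
  | succ p ih =>
    have h_orth : ⟪(tailSpan 𝕜 v p)ᗮ.starProjection x,
        ⟪tailDirection 𝕜 v p, x⟫_𝕜 • tailDirection 𝕜 v p⟫_𝕜 = 0 := by
      rw [inner_smul_right, (mem_orthogonal _ _).1 (tailDirection_mem_orthogonal v p) _
        (starProjection_apply_mem _ _), mul_zero]
    have h_step : ‖⟪tailDirection 𝕜 v p, x⟫_𝕜 • tailDirection 𝕜 v p‖ ≤
        ‖⟪tailDirection 𝕜 v p, x⟫_𝕜‖ := by
      rw [norm_smul]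
      exact mul_le_of_le_one_right (norm_nonneg _) (norm_tailDirection_le v p)
    rw [starProjection_orthogonal_tailSpan_succ, sq,
      norm_add_sq_eq_norm_sq_add_norm_sq_of_inner_eq_zero _ _ h_orth, Finset.sum_range_succ,
      ← sq, ← sq]
    gcongr

lemma norm_starProjection_orthogonal_tailSpan_sq_le {lam : ℕ → ℝ} {v : ℕ → E}
    (hv : (tailSpan 𝕜 v 0)ᗮ = ⊥)
    (h_dir : DominatesInner 𝕜 lam v fun m => (2 ^ (m + 2) : 𝕜) • tailDirection 𝕜 v m)
    {x : E} (hx : ‖x‖ ≤ 1) {s : ℝ} (hs : 0 ≤ s)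
    (hΦ : weightedFrameSum 𝕜 lam v x ≤ ENNReal.ofReal (s ^ 2)) (p : ℕ) :
    ‖(tailSpan 𝕜 v p)ᗮ.starProjection x‖ ^ 2 ≤ (s + 1) ^ 2 / 8 := by
  have h_inner : ∀ m, ‖⟪tailDirection 𝕜 v m, x⟫_𝕜‖ ^ 2 ≤ (s + 1) ^ 2 / 16 * (1 / 2) ^ m :=
    fun m => by
    have := h_dir m x s hs hΦ
    rw [inner_smul_left, norm_mul, RCLike.norm_conj, norm_pow, RCLike.norm_ofNat, pow_add] at this
    have h_half : ‖⟪tailDirection 𝕜 v m, x⟫_𝕜‖ ≤ (s + 1) / 4 * (1 / 2) ^ m := by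
      rw [one_div, inv_pow, ← div_eq_mul_inv, le_div_iff₀ (by positivity)]
      linarith
    calc ‖⟪tailDirection 𝕜 v m, x⟫_𝕜‖ ^ 2 ≤ ((s + 1) / 4 * (1 / 2) ^ m) ^ 2 := by gcongr
      _ = (s + 1) ^ 2 / 16 * ((1 / 2) ^ m * (1 / 2) ^ m) := by ring
      _ ≤ (s + 1) ^ 2 / 16 * (1 / 2) ^ m := by
        gcongr
        exact mul_le_of_le_one_left (by positivity) (pow_le_one₀ (by norm_num) (by norm_num))
  calc _ ≤ ∑ m ∈ Finset.range p, ‖⟪tailDirection 𝕜 v m, x⟫_𝕜‖ ^ 2 :=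
        norm_starProjection_orthogonal_tailSpan_sq_le_sum hv x p
    _ ≤ ∑ m ∈ Finset.range p, (s + 1) ^ 2 / 16 * (1 / 2) ^ m :=
        Finset.sum_le_sum fun m _ => h_inner m
    _ ≤ (s + 1) ^ 2 / 16 * 2 := by rw [← Finset.mul_sum]; gcongr; exact sum_geometric_two_le p
    _ = (s + 1) ^ 2 / 8 := by ring

lemma norm_starProjection_orthogonal_orthogonal_tailSpan_sq_le {lam : ℕ → ℝ} {v y : ℕ → E}
    (h_seq : DominatesInner 𝕜 lam v fun q => (8 : 𝕜) • (tailSpan 𝕜 v q)ᗮᗮ.starProjection (y q))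
    {x : E} (hx : ‖x‖ ≤ 1) {s : ℝ} (hs : 0 ≤ s)
    (hΦ : weightedFrameSum 𝕜 lam v x ≤ ENNReal.ofReal (s ^ 2)) {q : ℕ} (hq : ‖x - y q‖ ≤ 1 / 16) :
    8 * ‖(tailSpan 𝕜 v q)ᗮᗮ.starProjection x‖ ^ 2 ≤ s + 3 / 2 := by
  have h8 := h_seq q x s hs hΦ
  rw [inner_smul_left, norm_mul, RCLike.norm_conj, RCLike.norm_ofNat] at h8
  have := norm_starProjection_sq_le (tailSpan 𝕜 v q)ᗮᗮ x (y q)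
  have : ‖x - y q‖ * ‖x‖ ≤ 1 / 16 := by nlinarith [norm_nonneg x, norm_nonneg (x - y q)]
  linarith

lemma one_le_weightedFrameSum {lam : ℕ → ℝ} {v y : ℕ → E}
    (hv : (tailSpan 𝕜 v 0)ᗮ = ⊥) (hy : DenseRange y)
    (h_dir : DominatesInner 𝕜 lam v fun m => (2 ^ (m + 2) : 𝕜) • tailDirection 𝕜 v m)
    (h_seq : DominatesInner 𝕜 lam v fun q => (8 : 𝕜) • (tailSpan 𝕜 v q)ᗮᗮ.starProjection (y q))
    {x : E} (hx : ‖x‖ = 1) : 1 ≤ weightedFrameSum 𝕜 lam v x := by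
  rcases eq_or_ne (weightedFrameSum 𝕜 lam v x) ⊤ with htop | htop
  · simp [htop]
  set s := √(weightedFrameSum 𝕜 lam v x).toReal
  have hs : 0 ≤ s := Real.sqrt_nonneg _
  have hΦ : weightedFrameSum 𝕜 lam v x = ENNReal.ofReal (s ^ 2) := by
    rw [Real.sq_sqrt ENNReal.toReal_nonneg, ENNReal.ofReal_toReal htop]
  obtain ⟨q, hq⟩ := hy.exists_dist_lt x (by norm_num : (0 : ℝ) < 1 / 16)
  have h_head := norm_starProjection_orthogonal_tailSpan_sq_le hv h_dir hx.le hs hΦ.le q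
  have h_tail := norm_starProjection_orthogonal_orthogonal_tailSpan_sq_le h_seq hx.le hs hΦ.le
    (by rw [← dist_eq_norm]; exact hq.le)
  have h_pyth := norm_sq_eq_add_norm_sq_starProjection x (tailSpan 𝕜 v q)ᗮ
  rw [hx] at h_pyth
  have : 1 ≤ s := by nlinarith
  rw [hΦ]
  exact ENNReal.one_le_ofReal.2 (by nlinarith)

theorem exists_pos_weights_ofReal_norm_sq_le_weightedFrameSum (v : ℕ → E)
    (hv : (span 𝕜 (range v)).topologicalClosure = ⊤) :
    ∃ lam : ℕ → ℝ, (∀ n, 0 < lam n) ∧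
      ∀ x, ENNReal.ofReal (‖x‖ ^ 2) ≤ weightedFrameSum 𝕜 lam v x := by
  have := separableSpace_of_topologicalClosure_span_eq_top hv
  obtain ⟨y, hy⟩ := TopologicalSpace.exists_dense_seq E
  obtain ⟨lam₁, hlam₁, h₁⟩ := exists_weights_dominatesInner v
    (fun m => (2 ^ (m + 2) : 𝕜) • tailDirection 𝕜 v m)
    fun m => smul_mem _ _ (tailDirection_mem_orthogonal v m)
  obtain ⟨lam₂, hlam₂, h₂⟩ := exists_weights_dominatesInner v
    (fun q => (8 : 𝕜) • (tailSpan 𝕜 v q)ᗮᗮ.starProjection (y q))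
    fun q => smul_mem _ _ (starProjection_apply_mem _ _)
  refine ⟨lam₁ + lam₂, fun n => add_pos (hlam₁ n) (hlam₂ n),
    ofReal_norm_sq_le_weightedFrameSum_of_norm_eq_one fun x hx => ?_⟩
  exact one_le_weightedFrameSum (orthogonal_tailSpan_zero hv) hy
    (h₁.mono (le_add_of_nonneg_right fun n => (hlam₂ n).le))
    (h₂.mono (le_add_of_nonneg_left fun n => (hlam₁ n).le)) hx

end Complete

end

/-- If `(v n)_{n ≥ 1}` is a total sequence in a complex Hilbert space `H`, then there are
positive scalars `(λ n)_{n ≥ 1}` such that the scaled sequence `(√λ_n v n)` satisfies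
the lower frame inequality `‖x‖² ≤ ∑ n, λ n * |⟪v n, x⟫|²`, the right-hand side being
a sum in the extended nonnegative reals (possibly infinite). -/
theorem total_sequence_exists_lower_frame_bound
    {H : Type*} [NormedAddCommGroup H] [InnerProductSpace ℂ H] [CompleteSpace H]
    (v : ℕ → H)
    (hv : (Submodule.span ℂ (v '' {k | 1 ≤ k})).topologicalClosure = ⊤) :
    ∃ lam : ℕ → ℝ,
      (∀ n, 1 ≤ n → 0 < lam n) ∧
      ∀ x : H,
        ENNReal.ofReal (‖x‖ ^ 2) ≤
          ∑' n : ℕ, ENNReal.ofReal (lam (n + 1) * ‖(inner ℂ (v (n + 1)) x : ℂ)‖ ^ 2) := by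
  have h_range : v '' {k | 1 ≤ k} = range fun n => v (n + 1) := by
    ext
    simp only [mem_image, mem_ofPred_eq, mem_range]
    exact ⟨fun ⟨k, hk, h⟩ => ⟨k - 1, by rwa [Nat.sub_add_cancel hk]⟩,
      fun ⟨n, h⟩ => ⟨n + 1, Nat.le_add_left 1 n, h⟩⟩
  obtain ⟨lam, hlam, h⟩ :=
    exists_pos_weights_ofReal_norm_sq_le_weightedFrameSum (fun n => v (n + 1)) (h_range ▸ hv)
  exact ⟨fun n => lam (n - 1), fun n _ => hlam _, h⟩
end

section
/- Let H be a complex Hilbert space, let (u_n)_{n=1}^∞ be a sequence in H such that ⟨u_m, u_n⟩ = 0 for all m ≠ n, ‖u_n‖ ∈ {0, 1} for every n, and the closed linear span of {u_n : n ≥ 1} equals H. Let (z_n)_{n=1}^∞ be a sequence in H with ‖u_n − z_n‖ < 3^{-n} for all n. Then there exists a sequence (w_n)_{n=1}^∞ in H such that for every x ∈ H the series Σ_{n=1}^∞ ⟨z_n, x⟩ · w_n converges in H to x. -/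
/-!
The rank-one operators `x ↦ ⟪z n - u n, x⟫ • u n` have norms at most `3⁻ⁿ`, which sum to `1/2`,
so `T = 1 + ∑ n, ⟪z n - u n, ·⟫ • u n` is invertible by the Neumann series. Expanding `x` in the
orthonormal family `u` gives `∑ n, ⟪z n, x⟫ • u n = T x`, and applying `T⁻¹` yields the
decomposition with `w n = T⁻¹ (u n)`.
-/

open Filter

section

variable {𝕜 E ι : Type*} [RCLike 𝕜] [NormedAddCommGroup E] [InnerProductSpace 𝕜 E]
  [CompleteSpace E]

local notation "⟪" x ", " y "⟫" => inner 𝕜 x y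

/-- Discarding the zero vectors leaves a Hilbert basis, whose expansion the zeros do not change. -/
theorem hasSum_inner_smul_self_of_norm_eq_zero_or_one {u : ι → E}
    (horth : Pairwise fun i j => ⟪u i, u j⟫ = 0) (hnorm : ∀ i, ‖u i‖ = 0 ∨ ‖u i‖ = 1)
    (htotal : (Submodule.span 𝕜 (Set.range u)).topologicalClosure = ⊤) (x : E) :
    HasSum (fun i => ⟪u i, x⟫ • u i) x := by
  set S : Set ι := {i | u i ≠ 0}
  have hv : Orthonormal 𝕜 fun i : S => u i := by
    refine ⟨fun i => (hnorm i).resolve_left (norm_ne_zero_iff.mpr i.2), ?_⟩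
    exact fun i j hij => horth (Subtype.coe_injective.ne hij)
  have hsp : ⊤ ≤ (Submodule.span 𝕜 (Set.range fun i : S => u i)).topologicalClosure := by
    rw [← htotal]
    refine Submodule.topologicalClosure_mono (Submodule.span_le.mpr ?_)
    rintro _ ⟨i, rfl⟩
    by_cases hi : u i = 0
    · simp [hi]
    · exact Submodule.subset_span ⟨⟨i, hi⟩, rfl⟩
  have hS : HasSum (fun i : S => ⟪u i, x⟫ • u i) x := by
    simpa [HilbertBasis.repr_apply_apply] using (HilbertBasis.mk hv hsp).hasSum_repr x
  have hsupp : Function.support (fun i => ⟪u i, x⟫ • u i) ⊆ S :=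
    fun i hi h0 => hi (by simp [h0])
  exact (hasSum_subtype_iff_of_support_subset hsupp).mp hS

theorem exists_hasSum_inner_smul_of_tsum_norm_sub_mul_norm_lt_one {u z : ι → E}
    (hu : ∀ x, HasSum (fun i => ⟪u i, x⟫ • u i) x)
    (hs : Summable fun i => ‖z i - u i‖ * ‖u i‖)
    (hlt : ∑' i, ‖z i - u i‖ * ‖u i‖ < 1) :
    ∃ w : ι → E, ∀ x, HasSum (fun i => ⟪z i, x⟫ • w i) x := by
  set A : ι → E →L[𝕜] E := fun i => (innerSL 𝕜 (z i - u i)).smulRight (u i)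
  have hA : ∀ i, ‖A i‖ = ‖z i - u i‖ * ‖u i‖ := fun i => by
    simp only [A, ContinuousLinearMap.norm_smulRight_apply, innerSL_apply_norm]
  have hAs : Summable fun i => ‖A i‖ := by simpa only [hA] using hs
  set D := ∑' i, A i
  have hD : ‖-D‖ < 1 := by
    rw [norm_neg]
    exact (norm_tsum_le_tsum_norm hAs).trans_lt (by simpa only [hA] using hlt)
  set T : (E →L[𝕜] E)ˣ := Units.oneSub (-D) hD
  have hT : ∀ x, HasSum (fun i => ⟪z i, x⟫ • u i) ((T : E →L[𝕜] E) x) := fun x => by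
    have hDx : HasSum (fun i => ⟪z i - u i, x⟫ • u i) (D x) := by
      simpa only [A, ContinuousLinearMap.apply_apply, ContinuousLinearMap.smulRight_apply,
        innerSL_apply_apply] using
        (Summable.of_norm hAs).hasSum.mapL (ContinuousLinearMap.apply 𝕜 E x)
    convert (hu x).add hDx using 1
    · ext i
      rw [inner_sub_left, sub_smul, add_sub_cancel]
    · simp [T]
  refine ⟨fun i => (↑T⁻¹ : E →L[𝕜] E) (u i), fun x => ?_⟩
  convert (hT x).mapL (↑T⁻¹ : E →L[𝕜] E) using 1
  · simp only [map_smul]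
  · change x = ((↑T⁻¹ * ↑T : E →L[𝕜] E)) x
    rw [T.inv_mul]
    rfl

end

theorem hasSum_inv_three_pow_succ : HasSum (fun n : ℕ => (3⁻¹ : ℝ) ^ (n + 1)) 2⁻¹ := by
  have h := (hasSum_geometric_of_lt_one (r := (3⁻¹ : ℝ)) (by norm_num) (by norm_num)).mul_left 3⁻¹
  norm_num [← pow_succ'] at h
  simpa only [one_div] using h

/-- If `(u n)_{n ≥ 1}` is a pairwise orthogonal total sequence each of whose members has
norm 0 or 1, and `(z n)` satisfies `‖u n - z n‖ < 3⁻ⁿ`, then there is a sequence `(w n)`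
such that `∑ n, ⟪z n, x⟫ • w n` converges to `x` for every `x ∈ H`. -/
theorem perturbed_orthonormal_exists_identity_decomposition
    {H : Type*} [NormedAddCommGroup H] [InnerProductSpace ℂ H] [CompleteSpace H]
    (u z : ℕ → H)
    (horth : ∀ m n, 1 ≤ m → 1 ≤ n → m ≠ n → (inner ℂ (u m) (u n) : ℂ) = 0)
    (hnorm : ∀ n, 1 ≤ n → ‖u n‖ = 0 ∨ ‖u n‖ = 1)
    (htotal : (Submodule.span ℂ (u '' {n | 1 ≤ n})).topologicalClosure = ⊤)
    (hz : ∀ n, 1 ≤ n → ‖u n - z n‖ < (3 : ℝ) ^ (-(n : ℤ))) :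
    ∃ w : ℕ → H, ∀ x : H,
      Tendsto (fun N => ∑ n ∈ Finset.range N, (inner ℂ (z (n + 1)) x : ℂ) • w (n + 1))
        atTop (nhds x) := by
  have hrange : Set.range (fun n => u (n + 1)) = u '' {n | 1 ≤ n} := by
    rw [show {n : ℕ | 1 ≤ n} = Set.range Nat.succ from Nat.range_succ.symm, ← Set.range_comp]
    rfl
  have hu := hasSum_inner_smul_self_of_norm_eq_zero_or_one (u := fun n => u (n + 1))
    (fun m n hmn => horth _ _ (by omega) (by omega) (by omega)) (fun n => hnorm _ (by omega))
    (by rw [hrange, htotal])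
  have hbound : ∀ n : ℕ, ‖z (n + 1) - u (n + 1)‖ * ‖u (n + 1)‖ ≤ (3⁻¹ : ℝ) ^ (n + 1) := by
    intro n
    have hzn := hz (n + 1) (by omega)
    rw [zpow_neg, zpow_natCast, ← inv_pow] at hzn
    rw [norm_sub_rev, ← mul_one ((3⁻¹ : ℝ) ^ (n + 1))]
    exact mul_le_mul hzn.le ((hnorm _ (by omega)).elim (·.le.trans zero_le_one) (·.le))
      (norm_nonneg _) (by positivity)
  have hs := hasSum_inv_three_pow_succ.summable.of_nonneg_of_le (fun _ => by positivity) hbound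
  obtain ⟨w, hw⟩ := exists_hasSum_inner_smul_of_tsum_norm_sub_mul_norm_lt_one hu hs <|
    (hs.tsum_le_tsum hbound hasSum_inv_three_pow_succ.summable).trans_lt <| by
      rw [hasSum_inv_three_pow_succ.tsum_eq]; norm_num
  exact ⟨fun n => w (n - 1), fun x => by simpa using (hw x).tendsto_sum_nat⟩
end
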